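/- Let C be a finite vertex set with |C| = n, and let a ∈ C. Consider the Erdős–Rényi random graph G(n, p) on C with p·(n-1) ≤ 1 - ε for some ε > 0. Then the expected number of vertices in the connected component of a is at most 1/ε. -/

import Mathlib

/-!
If `a` reaches `v`, then some self-avoiding path `a = x₀, x₁, …, x_k = v` has all of its `k`
distinct edges present, an event of probability `p ^ k` by independence. A union bound therefore
dominates the expected component size by `S(C \ {a})`, where `S(U)` is the sum of `p ^ |t|` over
the nodup lists `t` of vertices of `U`. Splitting off the first entry of `t` gives
`S(U) = 1 + p ∑_{x ∈ U} S(U \ {x})`, the recursion of a branching process with mean offspring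
`p |U|`, and induction yields `S(U) ≤ 1 / ε` whenever `p |U| ≤ 1 - ε`.
-/

open MeasureTheory ProbabilityTheory Finset

namespace Finset

variable {α : Type*} [DecidableEq α]

def nodupLists (S : Finset α) : Finset (List α) :=
  S.powerset.biUnion fun T => ⟨T.val.lists, Multiset.lists_nodup_finset T⟩

theorem mem_nodupLists {S : Finset α} {t : List α} :
    t ∈ S.nodupLists ↔ t.Nodup ∧ ∀ x ∈ t, x ∈ S := by
  simp only [nodupLists, mem_biUnion, mem_powerset, mem_mk, Multiset.mem_lists_iff,
    Multiset.quot_mk_to_coe]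
  constructor
  · rintro ⟨T, hTS, hT⟩
    refine ⟨Multiset.coe_nodup.mp (hT ▸ T.nodup), fun x hx => hTS ?_⟩
    rw [← mem_val, hT]
    exact Multiset.mem_coe.mpr hx
  · rintro ⟨hnd, hS⟩
    exact ⟨t.toFinset, fun x hx => hS x (List.mem_toFinset.mp hx), by simp [hnd.dedup]⟩

theorem mem_nodupLists_erase {S : Finset α} {a : α} {t : List α} :
    t ∈ (S.erase a).nodupLists ↔ (a :: t).Nodup ∧ ∀ x ∈ t, x ∈ S := by
  simp only [mem_nodupLists, mem_erase, List.nodup_cons]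
  grind

theorem nodupLists_eq_insert (S : Finset α) :
    S.nodupLists = insert [] (S.biUnion fun x => (S.erase x).nodupLists.image (x :: ·)) := by
  ext (_ | ⟨x, t⟩)
  · simp [mem_nodupLists]
  · rw [mem_nodupLists, mem_insert, mem_biUnion]
    simp only [List.nodup_cons, List.mem_cons, forall_eq_or_imp, reduceCtorEq, false_or,
      mem_image, mem_nodupLists_erase, List.cons.injEq, exists_eq_right_right]
    tauto

theorem sum_nodupLists {M : Type*} [AddCommMonoid M] (S : Finset α) (f : List α → M) :
    ∑ t ∈ S.nodupLists, f t =
      f [] + ∑ x ∈ S, ∑ t ∈ (S.erase x).nodupLists, f (x :: t) := by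
  rw [nodupLists_eq_insert, sum_insert, sum_biUnion]
  · exact congrArg _ (sum_congr rfl fun x _ => sum_image fun _ _ _ _ h => List.cons_injective h)
  · intro x _ y _ hxy
    simp only [Function.onFun, disjoint_left, mem_image]
    rintro _ ⟨t, -, rfl⟩ ⟨t', -, h⟩
    exact hxy (List.cons.inj h).1.symm
  · simp

theorem sum_pow_length_nodupLists_le {p ε : ℝ} (hp : 0 ≤ p) (hε : 0 < ε) (S : Finset α)
    (hS : p * #S ≤ 1 - ε) : ∑ t ∈ S.nodupLists, p ^ t.length ≤ 1 / ε := by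
  induction S using Finset.strongInduction with
  | _ S ih =>
    have hterm :
        ∀ x ∈ S, ∑ t ∈ (S.erase x).nodupLists, p ^ (x :: t).length ≤ p * (1 / ε) := by
      intro x hx
      simp only [List.length_cons, pow_succ', ← mul_sum]
      refine mul_le_mul_of_nonneg_left (ih _ (erase_ssubset hx) ?_) hp
      exact (mul_le_mul_of_nonneg_left (by exact_mod_cast card_erase_le) hp).trans hS
    calc ∑ t ∈ S.nodupLists, p ^ t.length
        ≤ 1 + #S * (p * (1 / ε)) := by
          rw [sum_nodupLists, List.length_nil, pow_zero, ← nsmul_eq_mul, ← sum_const]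
          exact add_le_add_right (sum_le_sum hterm) 1
      _ = 1 + p * #S / ε := by ring
      _ ≤ 1 + (1 - ε) / ε := by gcongr
      _ = 1 / ε := by field_simp; ring

end Finset

theorem SimpleGraph.reachable_iff_exists_nodup_isChain {V : Type*} (H : SimpleGraph V) (a v : V) :
    H.Reachable a v ↔ ∃ t : List V,
      (a :: t).Nodup ∧ (a :: t).getLast (List.cons_ne_nil a t) = v ∧
        (a :: t).IsChain H.Adj := by
  classical
  constructor
  · rintro ⟨w⟩
    let P := w.toPath
    refine ⟨P.1.support.tail, ?_, ?_, ?_⟩ <;> simp only [Walk.cons_tail_support]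
    exacts [P.2.support_nodup, P.1.getLast_support, P.1.isChain_adj_support]
  · rintro ⟨t, -, hlast, hchain⟩
    exact (reachable_iff_reflTransGen a v).mpr
      (List.relationReflTransGen_of_exists_isChain_cons t hchain hlast)

-- The endpoint clause is what keeps the new pair `{x, y}` out of `E` in the inductive step.
theorem List.Nodup.exists_finset_consecutivePairs {V : Type*} [LinearOrder V] :
    ∀ {l : List V}, l.Nodup → ∃ E : Finset {q : V × V // q.1 < q.2}, #E = l.length - 1 ∧
      (∀ q ∈ E, q.1.1 ∈ l ∧ q.1.2 ∈ l) ∧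
      ∀ H : SimpleGraph V, l.IsChain H.Adj → ∀ q ∈ E, H.Adj q.1.1 q.1.2
  | [], _ => ⟨∅, rfl, by simp, by simp⟩
  | [_], _ => ⟨∅, rfl, by simp, by simp⟩
  | x :: y :: r, hl => by
    obtain ⟨hx, hyr⟩ := List.nodup_cons.mp hl
    obtain ⟨E, hcard, hmem, hadj⟩ := hyr.exists_finset_consecutivePairs
    obtain ⟨q, hq, hqx, hqadj⟩ : ∃ q : {q : V × V // q.1 < q.2}, q ∉ E ∧
        (q.1.1 = x ∧ q.1.2 = y ∨ q.1.1 = y ∧ q.1.2 = x) ∧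
        ∀ H : SimpleGraph V, H.Adj x y → H.Adj q.1.1 q.1.2 := by
      rcases lt_or_gt_of_ne (show x ≠ y by rintro rfl; simp at hx) with h | h
      · exact ⟨⟨(x, y), h⟩, fun hq => hx (hmem _ hq).1, by simp, fun _ => id⟩
      · exact ⟨⟨(y, x), h⟩, fun hq => hx (hmem _ hq).2, by simp, fun _ => .symm⟩
    refine ⟨insert q E, ?_, ?_, ?_⟩
    · simp [card_insert_of_notMem hq, hcard]
    · rintro q' hq'
      rcases mem_insert.mp hq' with rfl | hq'
      · rcases hqx with ⟨h1, h2⟩ | ⟨h1, h2⟩ <;> simp [h1, h2]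
      · exact ⟨List.mem_cons_of_mem _ (hmem _ hq').1, List.mem_cons_of_mem _ (hmem _ hq').2⟩
    · intro H hchain q' hq'
      obtain ⟨hxy, hchain⟩ := List.isChain_cons_cons.mp hchain
      rcases mem_insert.mp hq' with rfl | hq'
      exacts [hqadj H hxy, hadj H hchain q' hq']

theorem setOf_reachable_eq_biUnion {Ω V : Type*} [Fintype V] [DecidableEq V]
    (G : Ω → SimpleGraph V) (a v : V) :
    {ω | (G ω).Reachable a v} = ⋃ t ∈ {t ∈ (univ.erase a).nodupLists |
      (a :: t).getLast (List.cons_ne_nil a t) = v}, {ω | (a :: t).IsChain (G ω).Adj} := by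
  ext ω
  simp [SimpleGraph.reachable_iff_exists_nodup_isChain, mem_nodupLists_erase, and_assoc]

section RandomGraph

variable {Ω V : Type*} [MeasurableSpace Ω] {μ : Measure Ω} {G : Ω → SimpleGraph V}

theorem measurableSet_setOf_isChain_adj (hmeas : ∀ u v, MeasurableSet {ω | (G ω).Adj u v}) :
    ∀ l : List V, MeasurableSet {ω | l.IsChain (G ω).Adj}
  | [] => by simp
  | [_] => by simp
  | x :: y :: r => by
    simp only [List.isChain_cons_cons, Set.ofPred_and]
    exact (hmeas x y).inter (measurableSet_setOf_isChain_adj hmeas (y :: r))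

theorem measureReal_setOf_isChain_adj_le [LinearOrder V] {p : ℝ} (hp : 0 ≤ p)
    (hindep : iIndepSet (fun q : {q : V × V // q.1 < q.2} => {ω | (G ω).Adj q.1.1 q.1.2}) μ)
    (hprob : ∀ u v, u ≠ v → μ {ω | (G ω).Adj u v} = ENNReal.ofReal p)
    {l : List V} (hl : l.Nodup) : μ.real {ω | l.IsChain (G ω).Adj} ≤ p ^ (l.length - 1) := by
  obtain ⟨E, hcard, -, hadj⟩ := hl.exists_finset_consecutivePairs
  have hsub : {ω | l.IsChain (G ω).Adj} ⊆ ⋂ q ∈ E, {ω | (G ω).Adj q.1.1 q.1.2} := by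
    intro ω hω
    simpa using hadj (G ω) hω
  refine ENNReal.toReal_le_of_le_ofReal (by positivity) ((measure_mono hsub).trans ?_)
  rw [hindep.meas_biInter, prod_congr rfl fun q _ => hprob _ _ q.2.ne, prod_const, hcard,
    ENNReal.ofReal_pow hp]

variable [Fintype V]

theorem integral_natCard_setOf_eq_sum_measureReal [IsFiniteMeasure μ] (P : Ω → V → Prop)
    (hP : ∀ v, MeasurableSet {ω | P ω v}) :
    ∫ ω, (Nat.card {v | P ω v} : ℝ) ∂μ = ∑ v, μ.real {ω | P ω v} := by
  classical
  have hcard : ∀ ω, (Nat.card {v | P ω v} : ℝ) = ∑ v, {ω | P ω v}.indicator 1 ω := by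
    intro ω
    simp [Set.indicator_apply, Nat.card_eq_fintype_card, Fintype.card_subtype]
  simp_rw [hcard]
  rw [integral_finsetSum _ fun v _ => (integrable_const 1).indicator (hP v)]
  exact sum_congr rfl fun v _ => integral_indicator_one (hP v)

end RandomGraph

theorem er_subcritical_component_general {Ω : Type*} [MeasureSpace Ω]
    [IsProbabilityMeasure (ℙ : Measure Ω)]
    (n : ℕ) (p ε : ℝ) (hp0 : 0 ≤ p) (hε : 0 < ε)
    (hsub : p * ((n : ℝ) - 1) ≤ 1 - ε)
    (G : Ω → SimpleGraph (Fin n))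
    (hmeas : ∀ u v : Fin n, MeasurableSet {ω | (G ω).Adj u v})
    (hindep : iIndepSet
      (fun q : {q : Fin n × Fin n // q.1 < q.2} => {ω | (G ω).Adj q.1.1 q.1.2}) ℙ)
    (hprob : ∀ u v : Fin n, u ≠ v → ℙ {ω | (G ω).Adj u v} = ENNReal.ofReal p)
    (a : Fin n) :
    ∫ ω, (Nat.card {v : Fin n | (G ω).Reachable a v} : ℝ) ∂ℙ ≤ 1 / ε := by
  set T := (univ.erase a).nodupLists
  have hreach := setOf_reachable_eq_biUnion G a
  rw [integral_natCard_setOf_eq_sum_measureReal _ fun v => by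
    rw [hreach v]
    exact Finset.measurableSet_biUnion _ fun t _ => measurableSet_setOf_isChain_adj hmeas _]
  calc _ ≤ ∑ v, ∑ t ∈ T with (a :: t).getLast (List.cons_ne_nil a t) = v, p ^ t.length := by
        refine sum_le_sum fun v _ => ?_
        rw [hreach v]
        refine (measureReal_biUnion_finset_le _ _).trans (sum_le_sum fun t ht => ?_)
        exact measureReal_setOf_isChain_adj_le hp0 hindep hprob
          (mem_nodupLists_erase.mp (mem_filter.mp ht).1).1
    _ = ∑ t ∈ T, p ^ t.length := sum_fiberwise_of_maps_to (fun _ _ => mem_univ _) _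
    _ ≤ 1 / ε := by
      refine sum_pow_length_nodupLists_le hp0 hε _ ?_
      rwa [card_erase_of_mem (mem_univ a), card_univ, Fintype.card_fin,
        Nat.cast_sub (Nat.one_le_of_lt a.2), Nat.cast_one]

/-- In the Erdős–Rényi random graph `G(n,p)` with `p * (n-1) ≤ 1 - ε`
for some `ε > 0`, the expected number of vertices in the connected component of a
fixed vertex `a` is at most `1/ε`. -/
theorem er_subcritical_component {Ω : Type*} [MeasureSpace Ω]
    [IsProbabilityMeasure (ℙ : Measure Ω)]
    (n : ℕ) (p ε : ℝ) (hp0 : 0 ≤ p) (hp1 : p ≤ 1) (hε : 0 < ε)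
    (hsub : p * ((n : ℝ) - 1) ≤ 1 - ε)
    (G : Ω → SimpleGraph (Fin n))
    (hmeas : ∀ u v : Fin n, MeasurableSet {ω | (G ω).Adj u v})
    (hindep : iIndepSet
      (fun q : {q : Fin n × Fin n // q.1 < q.2} => {ω | (G ω).Adj q.1.1 q.1.2}) ℙ)
    (hprob : ∀ u v : Fin n, u ≠ v → ℙ {ω | (G ω).Adj u v} = ENNReal.ofReal p)
    (a : Fin n) :
    ∫ ω, (Nat.card {v : Fin n | (G ω).Reachable a v} : ℝ) ∂ℙ ≤ 1 / ε :=
  er_subcritical_component_general n p ε hp0 hε hsub G hmeas hindep hprob a
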